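/- arXiv:2209.01399 — 2 statements merged into one kernel-verified Lean document; each statement's English description precedes it below -/
import Mathlib

section
/- Let M be an R-module with finite Goldie (uniform) dimension. Then M is an fs-module if and only if M = M₁ ⊕ M₂ where M₁ is semisimple and M₂ is an fs-module with Soc(M₂) small in M. -/
/-- A submodule `N` of `M` is small (superfluous): `N + A = M` implies `A = M`. -/
def IsSmallSubmodule {R M : Type*} [Ring R] [AddCommGroup M] [Module R M]
    (N : Submodule R M) : Prop :=
  ∀ A : Submodule R M, N ⊔ A = ⊤ → A = ⊤

/-- `M` is an fs-module: it has only finitely many small submodules. -/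
def IsFsModule (R M : Type*) [Ring R] [AddCommGroup M] [Module R M] : Prop :=
  {N : Submodule R M | IsSmallSubmodule N}.Finite

/-- The radical of `M`, as the sum of all small submodules of `M`. -/
def modRad (R M : Type*) [Ring R] [AddCommGroup M] [Module R M] : Submodule R M :=
  sSup {N : Submodule R M | IsSmallSubmodule N}

/-- The radical of `M`, as the intersection of all maximal submodules of `M`. -/
def modRad' (R M : Type*) [Ring R] [AddCommGroup M] [Module R M] : Submodule R M :=
  sInf {N : Submodule R M | IsCoatom N}

/-- The socle of `M`: the sum of all minimal (simple) submodules of `M`. -/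
def modSoc (R M : Type*) [Ring R] [AddCommGroup M] [Module R M] : Submodule R M :=
  sSup {N : Submodule R M | IsAtom N}

/-- `M` has finite hollow dimension: for every descending chain `N₁ ⊇ N₂ ⊇ ⋯`
there is `n` such that `Nₙ / N_k` is small in `M / N_k` for all `k ≥ n`. -/
def HasFiniteHollowDim (R M : Type*) [Ring R] [AddCommGroup M] [Module R M] : Prop :=
  ∀ N : ℕ → Submodule R M, (∀ i j, i ≤ j → N j ≤ N i) →
    ∃ n, ∀ k, n ≤ k → IsSmallSubmodule (Submodule.map (N k).mkQ (N n))

/-- `M` has finite Goldie dimension: it contains no infinite direct sum of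
nonzero submodules. -/
def HasFiniteGoldieDim (R M : Type*) [Ring R] [AddCommGroup M] [Module R M] : Prop :=
  ¬ ∃ f : ℕ → Submodule R M, (∀ i, f i ≠ ⊥) ∧ iSupIndep f

/-!
If `M = M₁ ⊕ M₂` with `M₁` semisimple, then every small submodule of `M` projects to a
small, hence zero, submodule of `M₁`; so the small submodules of `M` are those of `M₂`.

Conversely, let `M` be an fs-module without such a decomposition. For every splitting
`M = A ⊕ B` with `A` semisimple, the simple submodules of `B` cannot all be small: finitely
many small submodules have a small sum. A simple submodule `N ≤ B` that is not small is a
direct summand, so `A ⊕ N` is again a semisimple summand with a complement inside `B`.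
Iterating produces infinitely many independent simple submodules, against finite Goldie dimension.
-/

theorem iSupIndep_of_disjoint_sup_range {α : Type*} [CompleteLattice α] [IsModularLattice α]
    [IsCompactlyGenerated α] {f : ℕ → α}
    (h : ∀ n, Disjoint (f n) ((Finset.range n).sup f)) : iSupIndep f := by
  have hrange : ∀ n, (Finset.range n).SupIndep f := by
    intro n
    induction n with
    | zero => exact Finset.supIndep_empty f
    | succ n ih => rw [Finset.range_add_one]; exact ih.insert (h n)
  refine iSupIndep_iff_supIndep.2 fun s => (hrange (s.sup id + 1)).subset fun i hi => ?_
  exact Finset.mem_range.2 (Nat.lt_succ_of_le (Finset.le_sup (f := id) hi))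

theorem exists_iSupIndep_of_forall_exists_le {α : Type*} [CompleteLattice α]
    [IsModularLattice α] [IsCompactlyGenerated α] (P : α → α → Prop)
    (hP : ∀ A B, P A B → Disjoint A B) {A₀ B₀ : α} (h₀ : P A₀ B₀)
    (step : ∀ A B, P A B → ∃ N ≤ B, N ≠ ⊥ ∧ ∃ B', P (A ⊔ N) B') :
    ∃ f : ℕ → α, (∀ n, f n ≠ ⊥) ∧ iSupIndep f := by
  let S := {p : α × α // P p.1 p.2}
  have step' : ∀ s : S, ∃ t : S, ∃ N ≤ s.1.2, N ≠ ⊥ ∧ t.1.1 = s.1.1 ⊔ N := by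
    rintro ⟨⟨A, B⟩, hAB⟩
    obtain ⟨N, hNB, hN, B', hB'⟩ := step A B hAB
    exact ⟨⟨(A ⊔ N, B'), hB'⟩, N, hNB, hN, rfl⟩
  choose next piece h_piece_le h_piece_ne h_next using step'
  let s : ℕ → S := fun n => next^[n] ⟨(A₀, B₀), h₀⟩
  let f : ℕ → α := fun n => piece (s n)
  have h_fst : ∀ n, (s n).1.1 = A₀ ⊔ (Finset.range n).sup f := by
    intro n
    induction n with
    | zero => simp [s]
    | succ n ih =>
      rw [show s (n + 1) = next (s n) from Function.iterate_succ_apply' next n _, h_next, ih,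
        Finset.range_add_one, Finset.sup_insert, sup_assoc, sup_comm ((Finset.range n).sup f)]
  refine ⟨f, fun n => h_piece_ne _, iSupIndep_of_disjoint_sup_range fun n => ?_⟩
  refine ((hP _ _ (s n).2).mono_left ?_).symm.mono_left (h_piece_le (s n))
  exact (h_fst n).symm ▸ le_sup_right

theorem IsCompl.sup_inf_of_le {α : Type*} [Lattice α] [BoundedOrder α] [IsModularLattice α]
    {A B N C : α} (hAB : IsCompl A B) (hNB : N ≤ B) (hNC : IsCompl N C) :
    IsCompl (A ⊔ N) (B ⊓ C) := by
  have hB : N ⊔ B ⊓ C = B := by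
    rw [inf_comm, ← sup_inf_assoc_of_le C hNB, hNC.sup_eq_top, top_inf_eq]
  exact (hNC.disjoint.mono_right inf_le_right).isCompl_sup_left_of_isCompl_sup_right
    (hB.symm ▸ hAB)

section SmallSubmodules

variable {R M : Type*} [Ring R] [AddCommGroup M] [Module R M]

theorem isSmallSubmodule_bot : IsSmallSubmodule (⊥ : Submodule R M) :=
  fun A h => by simpa using h

theorem IsSmallSubmodule.sup {N P : Submodule R M} (hN : IsSmallSubmodule N)
    (hP : IsSmallSubmodule P) : IsSmallSubmodule (N ⊔ P) :=
  fun A h => hP A (hN _ (by rwa [sup_assoc] at h))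

theorem Set.Finite.isSmallSubmodule_sSup {s : Set (Submodule R M)} (hs : s.Finite)
    (h : ∀ N ∈ s, IsSmallSubmodule N) : IsSmallSubmodule (sSup s) := by
  induction s, hs using Set.Finite.induction_on with
  | empty => simpa using isSmallSubmodule_bot
  | insert _ _ ih =>
    rw [sSup_insert]
    exact (h _ (Set.mem_insert _ _)).sup (ih fun N hN => h N (Set.mem_insert_of_mem _ hN))

theorem IsSmallSubmodule.map {M' : Type*} [AddCommGroup M'] [Module R M'] (f : M →ₗ[R] M')
    {N : Submodule R M} (hN : IsSmallSubmodule N) : IsSmallSubmodule (N.map f) := by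
  intro A hA
  have hcomap : N ⊔ A.comap f = ⊤ := by
    refine eq_top_iff.2 fun m _ => ?_
    obtain ⟨_, ⟨n, hn, rfl⟩, a, ha, hna⟩ :=
      Submodule.mem_sup.1 (hA ▸ Submodule.mem_top (x := f m))
    refine Submodule.mem_sup.2 ⟨n, hn, m - n, ?_, add_sub_cancel n m⟩
    rwa [Submodule.mem_comap, map_sub, ← hna, add_sub_cancel_left]
  have hNA : N.map f ≤ A :=
    Submodule.map_le_iff_le_comap.2 ((hN _ hcomap).symm ▸ le_top)
  rwa [sup_eq_right.2 hNA] at hA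

theorem IsSmallSubmodule.eq_bot [IsSemisimpleModule R M] {N : Submodule R M}
    (hN : IsSmallSubmodule N) : N = ⊥ := by
  obtain ⟨A, hA⟩ := exists_isCompl N
  simpa [hN A hA.sup_eq_top] using hA.inf_eq_bot

theorem IsAtom.exists_isCompl_of_not_isSmallSubmodule {N : Submodule R M} (hN : IsAtom N)
    (hsmall : ¬ IsSmallSubmodule N) : ∃ C, IsCompl N C := by
  simp only [IsSmallSubmodule, not_forall] at hsmall
  obtain ⟨A, hNA, hA⟩ := hsmall
  refine ⟨A, disjoint_iff.2 ?_, codisjoint_iff.2 hNA⟩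
  refine (hN.le_iff.1 inf_le_left).resolve_right fun h => hA ?_
  rwa [sup_eq_right.2 (h ▸ inf_le_right : N ≤ A)] at hNA

end SmallSubmodules

namespace IsFsModule

variable {R M : Type*} [Ring R] [AddCommGroup M] [Module R M]

theorem isSmallSubmodule_sSup (hM : IsFsModule R M) {s : Set (Submodule R M)}
    (h : ∀ N ∈ s, IsSmallSubmodule N) : IsSmallSubmodule (sSup s) :=
  (hM.subset h).isSmallSubmodule_sSup h

theorem submodule (hM : IsFsModule R M) (P : Submodule R M) : IsFsModule R P :=
  (hM.preimage (Submodule.map_injective_of_injective P.injective_subtype).injOn).subset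
    fun _ hN => hN.map P.subtype

theorem of_isCompl {M₁ M₂ : Submodule R M} (hc : IsCompl M₁ M₂) [IsSemisimpleModule R M₁]
    (hM₂ : IsFsModule R M₂) : IsFsModule R M := by
  refine (hM₂.image (Submodule.map M₂.subtype)).subset fun N hN => ?_
  have hN₂ : N ≤ M₂ := by
    rw [← Submodule.ker_projectionOnto hc, LinearMap.le_ker_iff_map]
    exact (hN.map _).eq_bot
  refine ⟨N.map (M₂.projectionOnto M₁ hc.symm), hN.map _, ?_⟩
  ext x
  constructor
  · rintro ⟨_, ⟨y, hy, rfl⟩, rfl⟩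
    rwa [Submodule.projectionOnto_apply_of_mem_left hc.symm (hN₂ hy)]
  · exact fun hx =>
      ⟨⟨x, hN₂ hx⟩, ⟨x, hx, Submodule.projectionOnto_apply_of_mem_left _ _⟩, rfl⟩

end IsFsModule

theorem fs_structure_of_finite_goldie (R M : Type*) [Ring R] [AddCommGroup M]
    [Module R M] (hG : HasFiniteGoldieDim R M) :
    IsFsModule R M ↔
      ∃ M₁ M₂ : Submodule R M, IsCompl M₁ M₂ ∧ IsSemisimpleModule R M₁ ∧
        IsFsModule R M₂ ∧
        IsSmallSubmodule (sSup {N : Submodule R M | N ≤ M₂ ∧ IsAtom N}) := by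
  refine ⟨fun hM => ?_, fun ⟨M₁, M₂, hc, _, hM₂, _⟩ => hM₂.of_isCompl hc⟩
  by_contra hdec
  refine hG (exists_iSupIndep_of_forall_exists_le
    (fun A B => IsCompl A B ∧ IsSemisimpleModule R A) (fun _ _ h => h.1.disjoint)
    ⟨isCompl_bot_top, .of_sSup_simples_eq_top (Subsingleton.elim _ _)⟩ ?_)
  rintro A B ⟨hAB, hA⟩
  obtain ⟨N, ⟨hNB, hN⟩, hNsmall⟩ :
      ∃ N ∈ {N : Submodule R M | N ≤ B ∧ IsAtom N}, ¬ IsSmallSubmodule N := by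
    by_contra! hsmall
    exact hdec ⟨A, B, hAB, hA, hM.submodule B, hM.isSmallSubmodule_sSup hsmall⟩
  obtain ⟨C, hNC⟩ := hN.exists_isCompl_of_not_isSmallSubmodule hNsmall
  have : IsSimpleModule R N := isSimpleModule_iff_isAtom.2 hN
  exact ⟨N, hNB, hN.1, B ⊓ C, hAB.sup_inf_of_le hNB hNC, hA.sup inferInstance⟩
end

section
/- An fs-module M is Artinian if and only if M has finite hollow dimension. -/
/-!
Let `Rad M` be the sum of the small submodules. In an fs-module it is a finite sum of small
submodules, hence small, so `Set.Iic (Rad M)` is a finite set of submodules. In a module of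
finite hollow dimension every submodule `L` has a weak supplement `V` (`L ⊔ V = ⊤` with
`L ⊓ V` small); since `L ⊓ V ≤ Rad M`, the hollow condition on a descending chain above `Rad M`
forces it to stabilize. By modularity, `x ↦ (x ⊓ Rad M, x ⊔ Rad M)` is strictly monotone, so
descending chain conditions on `Set.Iic (Rad M)` and on `Set.Ici (Rad M)` give one on `M`.
-/

theorem wellFoundedLT_of_Iic_of_Ici {α : Type*} [Lattice α] [IsModularLattice α] (a : α)
    [WellFoundedLT (Set.Iic a)] [WellFoundedLT (Set.Ici a)] : WellFoundedLT α :=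
  StrictMono.wellFoundedLT
    (f := fun x ↦ ((⟨x ⊓ a, inf_le_right⟩ : Set.Iic a), (⟨x ⊔ a, le_sup_right⟩ : Set.Ici a)))
    fun _ _ hxy ↦ strictMono_inf_prod_sup hxy

theorem sup_inf_eq_top_of_sup_eq_top {α : Type*} [Lattice α] [BoundedOrder α]
    [IsModularLattice α] {a b c : α} (hab : a ⊔ b = ⊤) (hc : a ⊓ b ⊔ c = ⊤) :
    a ⊔ b ⊓ c = ⊤ := by
  have hb : a ⊓ b ⊔ c ⊓ b = b := by
    rw [← sup_inf_assoc_of_le _ inf_le_right, hc, top_inf_eq]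
  calc a ⊔ b ⊓ c = a ⊔ (a ⊓ b ⊔ c ⊓ b) := by rw [← sup_assoc, sup_inf_self, inf_comm]
    _ = ⊤ := by rw [hb, hab]

section

open Submodule

variable {R M : Type*} [Ring R] [AddCommGroup M] [Module R M]

namespace IsSmallSubmodule

theorem bot : IsSmallSubmodule (⊥ : Submodule R M) := fun A hA ↦ by simpa using hA

theorem of_le {K N : Submodule R M} (hKN : K ≤ N) (hN : IsSmallSubmodule N) :
    IsSmallSubmodule K :=
  fun A hA ↦ hN A (top_unique (hA ▸ sup_le_sup_right hKN A))

theorem sup_s15 {K N : Submodule R M} (hK : IsSmallSubmodule K) (hN : IsSmallSubmodule N) :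
    IsSmallSubmodule (K ⊔ N) :=
  fun A hA ↦ hN A (hK (N ⊔ A) (by rwa [← sup_assoc]))

theorem sSup_of_finite {s : Set (Submodule R M)} (hs : s.Finite)
    (h : ∀ N ∈ s, IsSmallSubmodule N) : IsSmallSubmodule (sSup s) := by
  rw [← hs.coe_toFinset, ← Finset.sup_id_eq_sSup]
  exact Finset.sup_induction bot (fun _ hK _ hN ↦ hK.sup_s15 hN) fun N hN ↦ h N (by simpa using hN)

theorem sup_eq_top_of_map_mkQ {K L A : Submodule R M} (h : IsSmallSubmodule (L.map K.mkQ))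
    (hA : L ⊔ A = ⊤) : K ⊔ A = ⊤ := by
  have hmap : L.map K.mkQ ⊔ A.map K.mkQ = ⊤ := by
    rw [← Submodule.map_sup, hA, Submodule.map_top, range_mkQ]
  rw [← comap_map_mkQ, h _ hmap, comap_top]

end IsSmallSubmodule

theorem le_modRad {N : Submodule R M} (hN : IsSmallSubmodule N) : N ≤ modRad R M :=
  le_sSup hN

theorem IsFsModule.finite_Iic_modRad (hfs : IsFsModule R M) : (Set.Iic (modRad R M)).Finite :=
  have hsmall : IsSmallSubmodule (modRad R M) := .sSup_of_finite hfs fun _ h ↦ h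
  hfs.subset fun _ hK ↦ hsmall.of_le hK

theorem eq_of_isSmall_map_mkQ {K L V : Submodule R M} (hKL : K ≤ L) (hLV : L ⊓ V ≤ K)
    (hV : L ⊔ V = ⊤) (h : IsSmallSubmodule (L.map K.mkQ)) : K = L := by
  refine le_antisymm hKL ?_
  calc L = L ⊓ (K ⊔ V) := by rw [h.sup_eq_top_of_map_mkQ hV, inf_top_eq]
    _ = K ⊔ L ⊓ V := by rw [inf_comm, sup_inf_assoc_of_le V hKL, inf_comm]
    _ ≤ K := sup_le le_rfl hLV

open Classical in
/-- Iterated from `⊤`, this cuts `V` down by proper submodules witnessing that `P ⊓ V` is not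
small; the hollow condition forces a stage where `P ⊓ V` is small. -/
noncomputable def weakSupplementStep (P V : Submodule R M) : Submodule R M :=
  if h : ∃ A, P ⊓ V ⊔ A = ⊤ ∧ A ≠ ⊤ then V ⊓ h.choose else V

theorem weakSupplementStep_le (P V : Submodule R M) : weakSupplementStep P V ≤ V := by
  unfold weakSupplementStep
  split
  · exact inf_le_left
  · exact le_rfl

theorem sup_weakSupplementStep {P V : Submodule R M} (hV : P ⊔ V = ⊤) :
    P ⊔ weakSupplementStep P V = ⊤ := by
  unfold weakSupplementStep
  split
  · next h => exact sup_inf_eq_top_of_sup_eq_top hV h.choose_spec.1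
  · exact hV

theorem isSmall_inf_of_isSmall_map_weakSupplementStep {P V : Submodule R M}
    (h : IsSmallSubmodule (V.map (weakSupplementStep P V).mkQ)) : IsSmallSubmodule (P ⊓ V) := by
  by_contra hP
  have hA : ∃ A, P ⊓ V ⊔ A = ⊤ ∧ A ≠ ⊤ := by
    simpa [IsSmallSubmodule] using hP
  obtain ⟨hsup, hne⟩ := hA.choose_spec
  have hstep : weakSupplementStep P V = V ⊓ hA.choose := dif_pos hA
  have hVA : V ⊔ hA.choose = ⊤ :=
    eq_top_iff.2 (hsup.ge.trans (sup_le_sup_right inf_le_right _))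
  have := h.sup_eq_top_of_map_mkQ hVA
  rw [hstep, sup_eq_right.mpr inf_le_right] at this
  exact hne this

noncomputable def weakSupplementChain (P : Submodule R M) (k : ℕ) : Submodule R M :=
  (weakSupplementStep P)^[k] ⊤

theorem weakSupplementChain_succ (P : Submodule R M) (k : ℕ) :
    weakSupplementChain P (k + 1) = weakSupplementStep P (weakSupplementChain P k) :=
  Function.iterate_succ_apply' _ _ _

theorem antitone_weakSupplementChain (P : Submodule R M) : Antitone (weakSupplementChain P) :=
  antitone_nat_of_succ_le fun k ↦
    (weakSupplementChain_succ P k).trans_le (weakSupplementStep_le _ _)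

theorem sup_weakSupplementChain (P : Submodule R M) (k : ℕ) :
    P ⊔ weakSupplementChain P k = ⊤ := by
  induction k with
  | zero => exact sup_top_eq P
  | succ k ih => rw [weakSupplementChain_succ]; exact sup_weakSupplementStep ih

theorem HasFiniteHollowDim.exists_weak_supplement (hh : HasFiniteHollowDim R M)
    (P : Submodule R M) : ∃ V : Submodule R M, P ⊔ V = ⊤ ∧ IsSmallSubmodule (P ⊓ V) := by
  obtain ⟨n, hn⟩ := hh _ (antitone_weakSupplementChain P)
  refine ⟨_, sup_weakSupplementChain P n, isSmall_inf_of_isSmall_map_weakSupplementStep ?_⟩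
  rw [← weakSupplementChain_succ]
  exact hn (n + 1) n.le_succ

theorem HasFiniteHollowDim.wellFoundedLT_Ici_modRad (hh : HasFiniteHollowDim R M) :
    WellFoundedLT (Set.Ici (modRad R M)) := by
  refine (wellFoundedGT_iff_monotone_chain_condition (α := (Set.Ici (modRad R M))ᵒᵈ)).2
    fun f ↦ ?_
  let N : ℕ → Submodule R M := fun k ↦ (OrderDual.ofDual (f k) : Set.Ici (modRad R M))
  obtain ⟨n, hn⟩ := hh N fun _ _ hij ↦ f.monotone hij
  obtain ⟨V, hV, hsmall⟩ := hh.exists_weak_supplement (N n)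
  refine ⟨n, fun k hk ↦ ?_⟩
  have hNk : N k = N n :=
    eq_of_isSmall_map_mkQ (f.monotone hk) ((le_modRad hsmall).trans (f k).2) hV (hn k hk)
  exact (Subtype.ext hNk).symm

theorem IsArtinian.hasFiniteHollowDim [IsArtinian R M] : HasFiniteHollowDim R M := by
  intro N hN
  obtain ⟨n, hn⟩ := WellFoundedLT.antitone_chain_condition (f := N) hN
  refine ⟨n, fun k hk ↦ ?_⟩
  rw [← hn k hk, mkQ_map_self]
  exact .bot

end

theorem fs_artinian_iff_finite_hollow (R M : Type*) [Ring R] [AddCommGroup M]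
    [Module R M] (hfs : IsFsModule R M) :
    IsArtinian R M ↔ HasFiniteHollowDim R M := by
  refine ⟨fun _ ↦ IsArtinian.hasFiniteHollowDim, fun hh ↦ ?_⟩
  have : Finite (Set.Iic (modRad R M)) := hfs.finite_Iic_modRad.to_subtype
  have := hh.wellFoundedLT_Ici_modRad
  exact wellFoundedLT_of_Iic_of_Ici (modRad R M)
end
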